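/- arXiv:math/0006159 — 3 statements merged into one kernel-verified Lean document; each statement's English description precedes it below -/
import Mathlib

section
/- Let M ∈ GL(m, ℤ) and let M_β be the companion matrix of the polynomial x^m − k₁x^{m−1} − ⋯ − k_m with k_m = ±1 (the characteristic polynomial of M). For n ∈ ℤ^m define B_M(n) to be the matrix with columns Mn, (M² − k₁M)n, (M³ − k₁M² − k₂M)n, …, (M^{m−1} − k₁M^{m−2} − ⋯ − k_{m−2}M)n, k_m n. Then every integer m×m matrix B satisfying B M_β = M B has the form B = B_M(n) for some n ∈ ℤ^m. -/
/-- The companion matrix of `x^m - k₁ x^{m-1} - ⋯ - k_m`. -/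
def companionMat (m : ℕ) (k : Fin m → ℤ) : Matrix (Fin m) (Fin m) ℤ :=
  Matrix.of fun i j => if (i : ℕ) = 0 then k j else if (i : ℕ) = (j : ℕ) + 1 then 1 else 0

/-- The matrix `B_M(n)` with columns `Mn, (M²-k₁M)n, …, (M^{m-1}-k₁M^{m-2}-⋯-k_{m-2}M)n, k_m n`. -/
def BMat (m : ℕ) (M : Matrix (Fin m) (Fin m) ℤ) (k : Fin m → ℤ) (n : Fin m → ℤ) :
    Matrix (Fin m) (Fin m) ℤ :=
  Matrix.of fun i j =>
    if (j : ℕ) + 1 = m then k j * n i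
    else ((M ^ ((j : ℕ) + 1) -
        ∑ l : Fin m, if (l : ℕ) < (j : ℕ) then k l • M ^ ((j : ℕ) - (l : ℕ)) else 0).mulVec n) i

open Matrix in
theorem stmt5 (m : ℕ) (hm : 0 < m) (M : Matrix (Fin m) (Fin m) ℤ)
    (hdet : M.det = 1 ∨ M.det = -1) (k : Fin m → ℤ)
    (hchar : M.charpoly =
      Polynomial.X ^ m - ∑ j : Fin m, Polynomial.C (k j) * Polynomial.X ^ (m - 1 - (j : ℕ)))
    (hk : k ⟨m - 1, by omega⟩ = 1 ∨ k ⟨m - 1, by omega⟩ = -1)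
    (B : Matrix (Fin m) (Fin m) ℤ)
    (hB : B * companionMat m k = M * B) :
    ∃ n : Fin m → ℤ, B = BMat m M k n := by
  classical
  have hM : IsUnit M.det := by
    rcases hdet with h | h <;> rw [h]
    · exact isUnit_one
    · exact isUnit_one.neg
  set z : Fin m := ⟨0, hm⟩ with hz
  -- the candidate n
  set n : Fin m → ℤ := M⁻¹ *ᵥ (fun i => B i z) with hn
  have hb0 : M *ᵥ n = fun i => B i z := by
    rw [hn, Matrix.mulVec_mulVec, Matrix.mul_nonsing_inv M hM, Matrix.one_mulVec]
  have hinj : ∀ u v : Fin m → ℤ, M *ᵥ u = M *ᵥ v → u = v := by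
    intro u v h
    have h2 := congrArg (fun w => M⁻¹ *ᵥ w) h
    simpa [Matrix.mulVec_mulVec, Matrix.nonsing_inv_mul M hM, Matrix.one_mulVec] using h2
  -- column relations from hB
  have hcol : ∀ j : Fin m, (h : (j : ℕ) + 1 < m) →
      M *ᵥ (fun i => B i j) = fun i => k j * B i z + B i ⟨(j : ℕ) + 1, h⟩ := by
    intro j h
    funext i
    have hij := congrFun (congrFun hB.symm i) j
    rw [Matrix.mul_apply, Matrix.mul_apply] at hij
    have hr : ∀ l : Fin m, B i l * companionMat m k l j =
        (if l = z then k j * B i z else 0) + (if l = ⟨(j : ℕ) + 1, h⟩ then B i l else 0) := by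
      intro l
      simp only [companionMat, Matrix.of_apply]
      by_cases h0 : (l : ℕ) = 0
      · have : l = z := Fin.ext h0
        subst this
        simp [hz, mul_comm]
      · have hlz : l ≠ z := fun hh => h0 (by rw [hh])
        by_cases h1 : (l : ℕ) = (j : ℕ) + 1
        · have hle : l = ⟨(j : ℕ) + 1, h⟩ := Fin.ext h1
          subst hle
          simp [h0, h1, hlz, mul_comm]
        · have : l ≠ ⟨(j : ℕ) + 1, h⟩ := fun hh => h1 (by rw [hh])
          simp [h0, h1, hlz, this]
    calc ∑ l, M i l * B l j = ∑ l, B i l * companionMat m k l j := hij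
      _ = ∑ l, ((if l = z then k j * B i z else 0) + (if l = ⟨(j : ℕ) + 1, h⟩ then B i l else 0)) :=
          Finset.sum_congr rfl fun l _ => hr l
      _ = k j * B i z + B i ⟨(j : ℕ) + 1, h⟩ := by
          rw [Finset.sum_add_distrib, Finset.sum_ite_eq' Finset.univ z,
            Finset.sum_ite_eq' Finset.univ (⟨(j : ℕ) + 1, h⟩ : Fin m)]
          simp
  have hcolLast : ∀ j : Fin m, (j : ℕ) + 1 = m →
      M *ᵥ (fun i => B i j) = fun i => k j * B i z := by
    intro j h
    funext i
    have hij := congrFun (congrFun hB.symm i) j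
    rw [Matrix.mul_apply, Matrix.mul_apply] at hij
    have hr : ∀ l : Fin m, B i l * companionMat m k l j =
        (if l = z then k j * B i z else 0) := by
      intro l
      simp only [companionMat, Matrix.of_apply]
      by_cases h0 : (l : ℕ) = 0
      · have : l = z := Fin.ext h0
        subst this
        simp [hz, mul_comm]
      · have hlz : l ≠ z := fun hh => h0 (by rw [hh])
        have h1 : (l : ℕ) ≠ (j : ℕ) + 1 := by omega
        simp [h0, h1, hlz]
    calc ∑ l, M i l * B l j = ∑ l, B i l * companionMat m k l j := hij
      _ = ∑ l, (if l = z then k j * B i z else 0) := Finset.sum_congr rfl fun l _ => hr l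
      _ = k j * B i z := by rw [Finset.sum_ite_eq' Finset.univ z]; simp
  -- the key induction giving all columns except the last
  have key : ∀ jv : ℕ, (hj : jv + 1 < m) →
      (fun i => B i ⟨jv, by omega⟩) =
      (M ^ (jv + 1) - ∑ l : Fin m, if (l : ℕ) < jv then k l • M ^ (jv - (l : ℕ)) else 0) *ᵥ n := by
    intro jv
    induction jv with
    | zero =>
      intro hj
      have : (⟨0, by omega⟩ : Fin m) = z := rfl
      rw [this]
      simp [hb0.symm]
    | succ jv ih =>
      intro hj
      have hj' : jv + 1 < m := by omega
      have hind := ih hj'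
      have hrel := hcol ⟨jv, by omega⟩ (by simpa using hj')
      -- column jv+1 = M *ᵥ col jv - k jv • col 0
      have hcolnext : (fun i => B i ⟨jv + 1, by omega⟩) =
          M *ᵥ (fun i => B i ⟨jv, by omega⟩) - k ⟨jv, by omega⟩ • (fun i => B i z) := by
        funext i
        have := congrFun hrel i
        simp only [Pi.sub_apply, Pi.smul_apply, smul_eq_mul]
        rw [this]
        ring_nf
      rw [hcolnext, hind, ← hb0]
      -- now pure matrix algebra
      have halg : M * (M ^ (jv + 1) - ∑ l : Fin m, if (l : ℕ) < jv then k l • M ^ (jv - (l : ℕ)) else 0)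
          - k ⟨jv, by omega⟩ • M
          = M ^ (jv + 1 + 1) - ∑ l : Fin m, if (l : ℕ) < jv + 1 then k l • M ^ (jv + 1 - (l : ℕ)) else 0 := by
        have hsum1 : M * (∑ l : Fin m, if (l : ℕ) < jv then k l • M ^ (jv - (l : ℕ)) else 0)
            = ∑ l : Fin m, if (l : ℕ) < jv then k l • M ^ (jv + 1 - (l : ℕ)) else 0 := by
          rw [Finset.mul_sum]
          refine Finset.sum_congr rfl fun l _ => ?_
          by_cases hl : (l : ℕ) < jv
          · have hexp : jv + 1 - (l : ℕ) = (jv - (l : ℕ)) + 1 := by omega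
            rw [if_pos hl, if_pos hl, mul_smul_comm, hexp, pow_succ']
          · rw [if_neg hl, if_neg hl, mul_zero]
        have hsum2 : (∑ l : Fin m, if (l : ℕ) < jv + 1 then k l • M ^ (jv + 1 - (l : ℕ)) else 0)
            = (∑ l : Fin m, if (l : ℕ) < jv then k l • M ^ (jv + 1 - (l : ℕ)) else 0)
              + k ⟨jv, by omega⟩ • M := by
          have : ∀ l : Fin m, (if (l : ℕ) < jv + 1 then k l • M ^ (jv + 1 - (l : ℕ)) else 0)
              = (if (l : ℕ) < jv then k l • M ^ (jv + 1 - (l : ℕ)) else 0)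
                + (if l = (⟨jv, by omega⟩ : Fin m) then k l • M else 0) := by
            intro l
            by_cases hl : (l : ℕ) < jv
            · have h1 : (l : ℕ) < jv + 1 := by omega
              have h2 : l ≠ (⟨jv, by omega⟩ : Fin m) := by
                intro hh; rw [hh] at hl; simp at hl
              rw [if_pos h1, if_pos hl, if_neg h2, add_zero]
            · by_cases he : (l : ℕ) = jv
              · have h1 : (l : ℕ) < jv + 1 := by omega
                have h2 : l = (⟨jv, by omega⟩ : Fin m) := Fin.ext he
                rw [if_pos h1, if_neg hl, if_pos h2, zero_add, he]
                norm_num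
              · have h1 : ¬ (l : ℕ) < jv + 1 := by omega
                have h2 : l ≠ (⟨jv, by omega⟩ : Fin m) := by
                  intro hh; rw [hh] at he; simp at he
                rw [if_neg h1, if_neg hl, if_neg h2, add_zero]
          rw [Finset.sum_congr rfl fun l _ => this l, Finset.sum_add_distrib,
            Finset.sum_ite_eq' Finset.univ (⟨jv, by omega⟩ : Fin m)]
          simp
        rw [mul_sub, hsum1, hsum2, sub_sub, ← pow_succ']
      rw [Matrix.mulVec_mulVec, ← Matrix.smul_mulVec, ← Matrix.sub_mulVec, halg]
  -- conclude
  refine ⟨n, ?_⟩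
  funext i j
  simp only [BMat, Matrix.of_apply]
  by_cases hlast : (j : ℕ) + 1 = m
  · rw [if_pos hlast]
    have hrel := hcolLast j hlast
    have h2 : M *ᵥ (k j • n) = fun i => k j * B i z := by
      rw [Matrix.mulVec_smul, hb0]
      funext i; simp [mul_comm]
    have := hinj _ _ (hrel.trans h2.symm)
    have := congrFun this i
    simpa using this
  · rw [if_neg hlast]
    have hj : (j : ℕ) + 1 < m := by omega
    have hkey := key (j : ℕ) hj
    have hjeq : (⟨(j : ℕ), by omega⟩ : Fin m) = j := rfl
    rw [hjeq] at hkey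
    exact congrFun hkey i
end

section
/- Let β > 1 satisfy β³ = 3β² + 4β + 1. Then 3 + β⁻¹ is a unit of the ring ℤ[β], i.e., (3 + β⁻¹)⁻¹ ∈ ℤ[β]. Moreover 1/(3β² − 6β − 4) = (−13 − 21β + 6β²)/7, i.e., (3β² − 6β − 4)(−13 − 21β + 6β²) = 7 in ℚ(β). -/
theorem stmt14 (β : ℝ) (hβ : 1 < β) (h : β ^ 3 = 3 * β ^ 2 + 4 * β + 1) :
    (3 + β⁻¹)⁻¹ ∈ Algebra.adjoin ℤ ({β} : Set ℝ) ∧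
      (3 * β ^ 2 - 6 * β - 4) * (-13 - 21 * β + 6 * β ^ 2) = 7 := by
  have hβ0 : β ≠ 0 := by linarith
  have hinv : β⁻¹ = β ^ 2 - 3 * β - 4 := by
    field_simp
    linarith [h]
  constructor
  · have key : (3 + β⁻¹) * (9 + 10 * β - 3 * β ^ 2) = 1 := by
      rw [hinv]
      linear_combination (10 - 3 * β) * h
    rw [inv_eq_of_mul_eq_one_right key]
    have hb : β ∈ Algebra.adjoin ℤ ({β} : Set ℝ) := Algebra.subset_adjoin rfl
    have h9 : (9 : ℝ) ∈ Algebra.adjoin ℤ ({β} : Set ℝ) := by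
      have := Subalgebra.algebraMap_mem (Algebra.adjoin ℤ ({β} : Set ℝ)) (9 : ℤ)
      simpa using this
    have h10 : (10 : ℝ) ∈ Algebra.adjoin ℤ ({β} : Set ℝ) := by
      have := Subalgebra.algebraMap_mem (Algebra.adjoin ℤ ({β} : Set ℝ)) (10 : ℤ)
      simpa using this
    have h3 : (3 : ℝ) ∈ Algebra.adjoin ℤ ({β} : Set ℝ) := by
      have := Subalgebra.algebraMap_mem (Algebra.adjoin ℤ ({β} : Set ℝ)) (3 : ℤ)
      simpa using this
    exact sub_mem (add_mem h9 (mul_mem h10 hb)) (mul_mem h3 (pow_mem hb 2))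
  · linear_combination (18 * β - 45) * h
end

section
/- Let M ∈ GL(3, ℤ) have characteristic polynomial x³ − k₁x² − k₂x − k₃ with k₃ = ±1. With f_{M²} and f_M the associated forms, f_{M²} = ±(k₁k₂ + k₃) · f_M. Consequently, if there exists v ∈ ℤ³ with f_{M²}(v) = ±1, then k₁k₂ + k₃ = ±1. -/
/-- The integral form associated with a matrix `N`: `f_N(v) = det(v, Nv, N²v, …)`. -/
def assocForm (m : ℕ) (N : Matrix (Fin m) (Fin m) ℤ) (v : Fin m → ℤ) : ℤ :=
  Matrix.det (Matrix.of fun i j : Fin m => ((N ^ (j : ℕ)).mulVec v) i)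

/-!
Cayley–Hamilton gives `M³ = k₁M² + k₂M + k₃`, hence
`M⁴ = (k₁² + k₂)M² + (k₁k₂ + k₃)M + k₁k₃`. In `det(v, M²v, M⁴v)` only the `Mv`-component of
`M⁴v` survives, so `f_{M²}(v) = (k₁k₂ + k₃) det(v, M²v, Mv) = -(k₁k₂ + k₃) f_M(v)`; in particular
`k₁k₂ + k₃` divides every value of `f_{M²}`.
-/

open Matrix Polynomial

section CayleyHamilton

variable {n R : Type*} [Fintype n] [DecidableEq n] [CommRing R] {M : Matrix n n R} {k₁ k₂ k₃ : R}

theorem Matrix.pow_three_eq_of_charpoly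
    (hchar : M.charpoly = X ^ 3 - C k₁ * X ^ 2 - C k₂ * X - C k₃) :
    M ^ 3 = k₁ • M ^ 2 + k₂ • M + k₃ • 1 := by
  have h := M.aeval_self_charpoly
  simp only [hchar, map_sub, map_mul, map_pow, aeval_X, aeval_C,
    Algebra.algebraMap_eq_smul_one, smul_mul_assoc, one_mul] at h
  rw [← sub_eq_zero, ← h]
  abel

theorem Matrix.pow_four_mulVec_of_charpoly
    (hchar : M.charpoly = X ^ 3 - C k₁ * X ^ 2 - C k₂ * X - C k₃) (v : n → R) :
    M ^ 4 *ᵥ v = (k₁ ^ 2 + k₂) • (M ^ 2 *ᵥ v) + (k₁ * k₂ + k₃) • (M *ᵥ v) + (k₁ * k₃) • v := by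
  have h3 (w : n → R) : M ^ 3 *ᵥ w = k₁ • (M ^ 2 *ᵥ w) + k₂ • (M *ᵥ w) + k₃ • w := by
    rw [pow_three_eq_of_charpoly hchar, add_mulVec, add_mulVec, smul_mulVec, smul_mulVec,
      smul_mulVec, one_mulVec]
  have h4 : M ^ 4 *ᵥ v = M ^ 3 *ᵥ (M *ᵥ v) := by
    rw [mulVec_mulVec, ← pow_succ]
  have h3' : M ^ 2 *ᵥ (M *ᵥ v) = M ^ 3 *ᵥ v := by rw [mulVec_mulVec, ← pow_succ]
  have h2' : M *ᵥ (M *ᵥ v) = M ^ 2 *ᵥ v := by rw [mulVec_mulVec, sq]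
  rw [h4, h3, h3', h2', h3]
  module

end CayleyHamilton

theorem Matrix.det_of_three_rows_smul_add {R : Type*} [CommRing R] (u x y : Fin 3 → R)
    (a b c : R) :
    det (of ![u, x, a • x + b • y + c • u]) = -(b * det (of ![u, y, x])) := by
  simp only [det_fin_three, of_apply, cons_val_zero, cons_val_one, cons_val, Pi.add_apply,
    Pi.smul_apply, smul_eq_mul]
  ring

theorem assocForm_three_eq_det (N : Matrix (Fin 3) (Fin 3) ℤ) (v : Fin 3 → ℤ) :
    assocForm 3 N v = det (of ![v, N *ᵥ v, N ^ 2 *ᵥ v]) := by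
  rw [assocForm, ← det_transpose]
  congr 1
  ext i j
  fin_cases i <;> simp

theorem Int.eq_one_or_neg_one_of_mul_eq_one_or_neg_one {a b : ℤ} (h : a * b = 1 ∨ a * b = -1) :
    a = 1 ∨ a = -1 :=
  Int.isUnit_iff.mp (isUnit_of_mul_isUnit_left (Int.isUnit_iff.mpr h))

theorem assocForm_sq_of_charpoly {M : Matrix (Fin 3) (Fin 3) ℤ} {k₁ k₂ k₃ : ℤ}
    (hchar : M.charpoly = X ^ 3 - C k₁ * X ^ 2 - C k₂ * X - C k₃) (v : Fin 3 → ℤ) :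
    assocForm 3 (M ^ 2) v = -((k₁ * k₂ + k₃) * assocForm 3 M v) := by
  rw [assocForm_three_eq_det, assocForm_three_eq_det, ← pow_mul,
    pow_four_mulVec_of_charpoly hchar, det_of_three_rows_smul_add]

theorem stmt16_general (M : Matrix (Fin 3) (Fin 3) ℤ) (k₁ k₂ k₃ : ℤ)
    (hchar : M.charpoly = Polynomial.X ^ 3 - Polynomial.C k₁ * Polynomial.X ^ 2
      - Polynomial.C k₂ * Polynomial.X - Polynomial.C k₃) :
    ((∀ v : Fin 3 → ℤ, assocForm 3 (M ^ 2) v = (k₁ * k₂ + k₃) * assocForm 3 M v) ∨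
     (∀ v : Fin 3 → ℤ, assocForm 3 (M ^ 2) v = -((k₁ * k₂ + k₃) * assocForm 3 M v))) ∧
    ((∃ v : Fin 3 → ℤ, assocForm 3 (M ^ 2) v = 1 ∨ assocForm 3 (M ^ 2) v = -1) →
      (k₁ * k₂ + k₃ = 1 ∨ k₁ * k₂ + k₃ = -1)) := by
  have hform := assocForm_sq_of_charpoly hchar
  refine ⟨Or.inr hform, fun ⟨v, hv⟩ => ?_⟩
  rw [hform, ← mul_neg] at hv
  exact Int.eq_one_or_neg_one_of_mul_eq_one_or_neg_one hv

theorem stmt16 (M : Matrix (Fin 3) (Fin 3) ℤ) (k₁ k₂ k₃ : ℤ)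
    (hchar : M.charpoly = Polynomial.X ^ 3 - Polynomial.C k₁ * Polynomial.X ^ 2
      - Polynomial.C k₂ * Polynomial.X - Polynomial.C k₃)
    (hk : k₃ = 1 ∨ k₃ = -1) :
    ((∀ v : Fin 3 → ℤ, assocForm 3 (M ^ 2) v = (k₁ * k₂ + k₃) * assocForm 3 M v) ∨
     (∀ v : Fin 3 → ℤ, assocForm 3 (M ^ 2) v = -((k₁ * k₂ + k₃) * assocForm 3 M v))) ∧
    ((∃ v : Fin 3 → ℤ, assocForm 3 (M ^ 2) v = 1 ∨ assocForm 3 (M ^ 2) v = -1) →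
      (k₁ * k₂ + k₃ = 1 ∨ k₁ * k₂ + k₃ = -1)) :=
  stmt16_general M k₁ k₂ k₃ hchar
end
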